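/- Under a strictly positive joint distribution (so that the intersection property of conditional independence holds), the minimal Markov blanket of a target variable T is unique: if S1 and S2 are both Markov blankets of T, then S1 ∩ S2 is also a Markov blanket of T. -/
import Mathlib


open scoped Classical

/-- Marginal of the joint pmf `p` on the variable set `S`, evaluated at configuration `f`. -/
noncomputable def Marg {V : Type*} [Fintype V] [DecidableEq V] {vals : V → Type*}
    [∀ v, Fintype (vals v)] (p : (∀ v, vals v) → ℝ) (S : Finset V)
    (f : ∀ v, vals v) : ℝ :=
  ∑ u : ∀ v, vals v, if ∀ v ∈ S, u v = f v then p u else 0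

/-- Conditional independence of the variable sets `A` and `B` given `C`,
phrased via the factorization of marginals of the joint pmf `p`. -/
def CI {V : Type*} [Fintype V] [DecidableEq V] {vals : V → Type*}
    [∀ v, Fintype (vals v)] (p : (∀ v, vals v) → ℝ) (A B C : Finset V) : Prop :=
  ∀ f, Marg p (A ∪ B ∪ C) f * Marg p C f = Marg p (A ∪ C) f * Marg p (B ∪ C) f

section Aux

variable {V : Type*} [Fintype V] [DecidableEq V] {vals : V → Type*} [∀ v, Fintype (vals v)]
  {p : (∀ v, vals v) → ℝ}

lemma marg_pos (hpos : ∀ u, 0 < p u) (S : Finset V) (f : ∀ v, vals v) :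
    0 < Marg p S f := by
  unfold Marg
  refine Finset.sum_pos' (fun u _ => ?_) ⟨f, Finset.mem_univ f, ?_⟩
  · split
    · exact (hpos u).le
    · exact le_rfl
  · simp [hpos f]

lemma marg_congr {S : Finset V} {f g : ∀ v, vals v} (h : ∀ v ∈ S, f v = g v) :
    Marg p S f = Marg p S g := by
  refine Finset.sum_congr rfl fun u _ => ?_
  have hiff : (∀ v ∈ S, u v = f v) ↔ (∀ v ∈ S, u v = g v) :=
    ⟨fun H v hv => (H v hv).trans (h v hv), fun H v hv => (H v hv).trans (h v hv).symm⟩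
  exact if_congr hiff rfl rfl

lemma marg_marg {S T' : Finset V} (hST : S ⊆ T') (f : ∀ v, vals v) :
    Marg p S f = ∑ g : ∀ v, vals v,
      if ∀ v, v ∉ T' \ S → g v = f v then Marg p T' g else 0 := by
  unfold Marg
  have step : ∀ g : ∀ v, vals v,
      (if ∀ v, v ∉ T' \ S → g v = f v then
        ∑ u : ∀ v, vals v, if ∀ v ∈ T', u v = g v then p u else 0 else 0)
      = ∑ u : ∀ v, vals v,
          if (∀ v, v ∉ T' \ S → g v = f v) ∧ (∀ v ∈ T', u v = g v) then p u else 0 := by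
    intro g
    split
    · next h =>
        refine Finset.sum_congr rfl fun u _ => ?_
        exact (if_congr (and_iff_right h) rfl rfl).symm
    · next h =>
        symm
        refine Finset.sum_eq_zero fun u _ => ?_
        exact if_neg (fun hc => h hc.1)
  rw [Finset.sum_congr rfl fun g _ => step g, Finset.sum_comm]
  refine Finset.sum_congr rfl fun u _ => ?_
  by_cases hu : ∀ v ∈ S, u v = f v
  · rw [if_pos hu]
    have : (fun g : ∀ v, vals v => if (∀ v, v ∉ T' \ S → g v = f v) ∧ (∀ v ∈ T', u v = g v)
        then p u else 0) = fun g => if g = (fun v => if v ∈ T' then u v else f v) then p u else 0 := by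
      funext g
      congr 1
      apply propext
      constructor
      · rintro ⟨h1, h2⟩
        funext v
        by_cases hvT : v ∈ T'
        · simp only [hvT, if_true]
          exact (h2 v hvT).symm
        · have hns : v ∉ T' \ S := fun hc => hvT (Finset.mem_sdiff.mp hc).1
          simp only [hvT, if_false]
          exact h1 v hns
      · rintro rfl
        refine ⟨fun v hv => ?_, fun v hv => ?_⟩
        · by_cases hvT : v ∈ T'
          · have hvS : v ∈ S := by
              by_contra hvS
              exact hv (Finset.mem_sdiff.mpr ⟨hvT, hvS⟩)
            simp [hvT, hu v hvS]
          · simp [hvT]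
        · simp [hv]
    rw [this, Finset.sum_ite_eq' Finset.univ _ (fun _ => p u)]
    simp
  · rw [if_neg hu]
    symm
    refine Finset.sum_eq_zero fun g _ => ?_
    rw [if_neg]
    rintro ⟨h1, h2⟩
    apply hu
    intro v hv
    have hvT : v ∈ T' := hST hv
    have hns : v ∉ T' \ S := by simp [hv]
    rw [h2 v hvT, h1 v hns]

lemma ci_congr {A B B' C C' : Finset V} (h : CI p A B C) (hB : B = B') (hC : C = C') :
    CI p A B' C' := by subst hB; subst hC; exact h

lemma CI.decomp {A B C D : Finset V} (hAD : Disjoint A D) (h : CI p A (B ∪ D) C) :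
    CI p A B C := by
  intro f
  have hDA : ∀ v, v ∈ D → v ∉ A := fun v hv hvA => Finset.disjoint_left.mp hAD hvA hv
  have hs1 : (A ∪ B ∪ C ∪ D) \ (A ∪ B ∪ C) = D \ (B ∪ C) := by
    ext v
    simp only [Finset.mem_sdiff, Finset.mem_union]
    have := hDA v
    tauto
  have hs2 : (B ∪ C ∪ D) \ (B ∪ C) = D \ (B ∪ C) := by
    ext v; simp only [Finset.mem_sdiff, Finset.mem_union]; tauto
  have mm1 := marg_marg (p := p) (show A ∪ B ∪ C ⊆ A ∪ B ∪ C ∪ D from Finset.subset_union_left) f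
  rw [hs1] at mm1
  have mm2 := marg_marg (p := p) (show B ∪ C ⊆ B ∪ C ∪ D from Finset.subset_union_left) f
  rw [hs2] at mm2
  have hs3 : A ∪ (B ∪ D) ∪ C = A ∪ B ∪ C ∪ D := by
    ext v; simp only [Finset.mem_union]; tauto
  have hs4 : B ∪ D ∪ C = B ∪ C ∪ D := by
    ext v; simp only [Finset.mem_union]; tauto
  rw [mm1, mm2, Finset.sum_mul, Finset.mul_sum]
  refine Finset.sum_congr rfl fun g _ => ?_
  by_cases hg : ∀ v, v ∉ D \ (B ∪ C) → g v = f v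
  · rw [if_pos hg, if_pos hg]
    have hgC : Marg p C f = Marg p C g :=
      marg_congr fun v hv =>
        (hg v (fun hc => (Finset.mem_sdiff.mp hc).2 (Finset.mem_union_right _ hv))).symm
    have hgAC : Marg p (A ∪ C) f = Marg p (A ∪ C) g := by
      refine marg_congr fun v hv => (hg v ?_).symm
      intro hc
      obtain ⟨hvD, hvBC⟩ := Finset.mem_sdiff.mp hc
      rcases Finset.mem_union.mp hv with hvA | hvC
      · exact hDA v hvD hvA
      · exact hvBC (Finset.mem_union_right _ hvC)
    have hf := h g
    rw [hs3, hs4] at hf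
    rw [hgC, hgAC]
    exact hf
  · rw [if_neg hg, if_neg hg, zero_mul, mul_zero]

lemma CI.weakUnion (hpos : ∀ u, 0 < p u) {A B C D : Finset V} (hAB : Disjoint A B)
    (h : CI p A (B ∪ D) C) : CI p A B (C ∪ D) := by
  have hd : CI p A D C := CI.decomp hAB (by rwa [Finset.union_comm B D] at h)
  intro f
  have h1 := h f
  have h2 := hd f
  have hs1 : A ∪ (B ∪ D) ∪ C = A ∪ B ∪ (C ∪ D) := by
    ext v; simp only [Finset.mem_union]; tauto
  have hs2 : B ∪ D ∪ C = B ∪ (C ∪ D) := by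
    ext v; simp only [Finset.mem_union]; tauto
  have hs3 : A ∪ D ∪ C = A ∪ (C ∪ D) := by
    ext v; simp only [Finset.mem_union]; tauto
  have hs4 : D ∪ C = C ∪ D := Finset.union_comm D C
  rw [hs1, hs2] at h1
  rw [hs3, hs4] at h2
  refine mul_right_cancel₀ (marg_pos hpos C f).ne' ?_
  linear_combination (Marg p (C ∪ D) f) * h1 - (Marg p (B ∪ (C ∪ D)) f) * h2

lemma CI.inter (hpos : ∀ u, 0 < p u) {A B C D : Finset V}
    (hAD : Disjoint A D) (hBD : Disjoint B D)
    (h1 : CI p A B (C ∪ D)) (h2 : CI p A D (C ∪ B)) : CI p A (B ∪ D) C := by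
  have hDA : ∀ v, v ∈ D → v ∉ A := fun v hv hvA => Finset.disjoint_left.mp hAD hvA hv
  have hDB : ∀ v, v ∈ D → v ∉ B := fun v hv hvB => Finset.disjoint_left.mp hBD hvB hv
  have t1 : A ∪ B ∪ (C ∪ D) = A ∪ B ∪ C ∪ D := by
    ext v; simp only [Finset.mem_union]; tauto
  have t2 : A ∪ (C ∪ D) = A ∪ C ∪ D := by
    ext v; simp only [Finset.mem_union]; tauto
  have t3 : B ∪ (C ∪ D) = B ∪ C ∪ D := by
    ext v; simp only [Finset.mem_union]; tauto
  have t4 : A ∪ D ∪ (C ∪ B) = A ∪ B ∪ C ∪ D := by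
    ext v; simp only [Finset.mem_union]; tauto
  have t5 : C ∪ B = B ∪ C := Finset.union_comm C B
  have t6 : A ∪ (C ∪ B) = A ∪ B ∪ C := by
    ext v; simp only [Finset.mem_union]; tauto
  have t7 : D ∪ (C ∪ B) = B ∪ C ∪ D := by
    ext v; simp only [Finset.mem_union]; tauto
  have key : ∀ g, Marg p (A ∪ C ∪ D) g * Marg p (B ∪ C) g
      = Marg p (A ∪ B ∪ C) g * Marg p (C ∪ D) g := by
    intro g
    have e1 := h1 g
    have e2 := h2 g
    rw [t1, t2, t3] at e1
    rw [t4, t6, t7, t5] at e2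
    refine mul_right_cancel₀ (marg_pos hpos (A ∪ B ∪ C ∪ D) g).ne' ?_
    refine mul_right_cancel₀ (marg_pos hpos (B ∪ C ∪ D) g).ne' ?_
    linear_combination (Marg p (C ∪ D) g * Marg p (A ∪ B ∪ C ∪ D) g) * e2
      - (Marg p (B ∪ C) g * Marg p (A ∪ B ∪ C ∪ D) g) * e1
  intro f
  have hsd : (A ∪ C ∪ D) \ (A ∪ C) = (C ∪ D) \ C := by
    ext v
    simp only [Finset.mem_sdiff, Finset.mem_union]
    have := hDA v
    tauto
  have mm1 := marg_marg (p := p) (show A ∪ C ⊆ A ∪ C ∪ D from Finset.subset_union_left) f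
  rw [hsd] at mm1
  have mm2 := marg_marg (p := p) (show C ⊆ C ∪ D from Finset.subset_union_left) f
  have claim : Marg p (A ∪ C) f * Marg p (C ∪ D) f = Marg p (A ∪ C ∪ D) f * Marg p C f := by
    rw [mm1, mm2, Finset.sum_mul, Finset.mul_sum]
    refine Finset.sum_congr rfl fun g _ => ?_
    by_cases hg : ∀ v, v ∉ (C ∪ D) \ C → g v = f v
    · rw [if_pos hg, if_pos hg]
      have hbc : Marg p (B ∪ C) g = Marg p (B ∪ C) f := by
        refine marg_congr fun v hv => hg v ?_
        intro hc
        obtain ⟨hvCD, hvC⟩ := Finset.mem_sdiff.mp hc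
        rcases Finset.mem_union.mp hv with hvB | hvC'
        · rcases Finset.mem_union.mp hvCD with h' | h'
          · exact hvC h'
          · exact hDB v h' hvB
        · exact hvC hvC'
      have habc : Marg p (A ∪ B ∪ C) g = Marg p (A ∪ B ∪ C) f := by
        refine marg_congr fun v hv => hg v ?_
        intro hc
        obtain ⟨hvCD, hvC⟩ := Finset.mem_sdiff.mp hc
        rcases Finset.mem_union.mp hv with hvAB | hvC'
        · rcases Finset.mem_union.mp hvAB with h' | h'
          · rcases Finset.mem_union.mp hvCD with h'' | h''
            · exact hvC h''
            · exact hDA v h'' h'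
          · rcases Finset.mem_union.mp hvCD with h'' | h''
            · exact hvC h''
            · exact hDB v h'' h'
        · exact hvC hvC'
      have kg := key g
      have kf := key f
      rw [hbc, habc] at kg
      refine mul_right_cancel₀ (marg_pos hpos (B ∪ C) f).ne' ?_
      linear_combination (Marg p (C ∪ D) f) * kg - (Marg p (C ∪ D) g) * kf
    · rw [if_neg hg, if_neg hg, zero_mul, mul_zero]
  have h1f := h1 f
  rw [t1, t2, t3] at h1f
  have u1 : A ∪ (B ∪ D) ∪ C = A ∪ B ∪ C ∪ D := by
    ext v; simp only [Finset.mem_union]; tauto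
  have u2 : B ∪ D ∪ C = B ∪ C ∪ D := by
    ext v; simp only [Finset.mem_union]; tauto
  rw [u1, u2]
  refine mul_right_cancel₀ (marg_pos hpos (C ∪ D) f).ne' ?_
  linear_combination (Marg p C f) * h1f - (Marg p (B ∪ C ∪ D) f) * claim

end Aux

/-- For a strictly positive joint distribution over finitely many
finite-valued variables (so the intersection property holds), the minimal Markov blanket
of a target `T` is unique: if `S1` and `S2` are both Markov blankets of `T`, so is
`S1 ∩ S2`. -/
theorem markov_blanket_intersection
    {V : Type*} [Fintype V] [DecidableEq V] {vals : V → Type*} [∀ v, Fintype (vals v)]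
    (p : (∀ v, vals v) → ℝ) (hpos : ∀ u, 0 < p u) (hsum : ∑ u, p u = 1)
    (T : V) (S1 S2 : Finset V)
    (hS1 : T ∉ S1) (hMB1 : CI p {T} (Finset.univ.erase T \ S1) S1)
    (hS2 : T ∉ S2) (hMB2 : CI p {T} (Finset.univ.erase T \ S2) S2) :
    T ∉ S1 ∩ S2 ∧ CI p {T} (Finset.univ.erase T \ (S1 ∩ S2)) (S1 ∩ S2) := by

  refine ⟨fun h => hS1 (Finset.mem_inter.mp h).1, ?_⟩
  have eS1 : S1 = (S1 ∩ S2) ∪ (S1 \ S2) := by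
    ext v; simp only [Finset.mem_union, Finset.mem_inter, Finset.mem_sdiff]; tauto
  have eS2 : S2 = (S1 ∩ S2) ∪ (S2 \ S1) := by
    ext v; simp only [Finset.mem_union, Finset.mem_inter, Finset.mem_sdiff]; tauto
  have e1 : Finset.univ.erase T \ S1 = (S2 \ S1) ∪ (Finset.univ.erase T \ (S1 ∪ S2)) := by
    ext v
    by_cases hv : v = T
    · subst hv; simp [hS1, hS2]
    · simp only [Finset.mem_sdiff, Finset.mem_erase, Finset.mem_union, Finset.mem_univ,
        and_true, ne_eq, hv, not_false_eq_true, true_and]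
      tauto
  have e2 : Finset.univ.erase T \ S2 = (S1 \ S2) ∪ (Finset.univ.erase T \ (S1 ∪ S2)) := by
    ext v
    by_cases hv : v = T
    · subst hv; simp [hS1, hS2]
    · simp only [Finset.mem_sdiff, Finset.mem_erase, Finset.mem_union, Finset.mem_univ,
        and_true, ne_eq, hv, not_false_eq_true, true_and]
      tauto
  have e3 : Finset.univ.erase T \ (S1 ∩ S2)
      = (S1 \ S2) ∪ ((S2 \ S1) ∪ (Finset.univ.erase T \ (S1 ∪ S2))) := by
    ext v
    by_cases hv : v = T
    · subst hv; simp [hS1, hS2]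
    · simp only [Finset.mem_sdiff, Finset.mem_erase, Finset.mem_union, Finset.mem_inter,
        Finset.mem_univ, and_true, ne_eq, hv, not_false_eq_true, true_and]
      tauto
  have m1 : CI p {T} ((S2 \ S1) ∪ (Finset.univ.erase T \ (S1 ∪ S2)))
      ((S1 ∩ S2) ∪ (S1 \ S2)) := ci_congr hMB1 e1 eS1
  have m2 : CI p {T} ((S1 \ S2) ∪ (Finset.univ.erase T \ (S1 ∪ S2)))
      ((S1 ∩ S2) ∪ (S2 \ S1)) := ci_congr hMB2 e2 eS2
  have dTY : Disjoint ({T} : Finset V) (S1 \ S2) := by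
    rw [Finset.disjoint_singleton_left]
    simp [hS1]
  have dTWR : Disjoint ({T} : Finset V)
      ((S2 \ S1) ∪ (Finset.univ.erase T \ (S1 ∪ S2))) := by
    rw [Finset.disjoint_singleton_left]
    simp [hS2]
  have dYWR : Disjoint (S1 \ S2) ((S2 \ S1) ∪ (Finset.univ.erase T \ (S1 ∪ S2))) := by
    rw [Finset.disjoint_left]
    intro v hv hv2
    simp only [Finset.mem_sdiff, Finset.mem_union, Finset.mem_erase] at hv hv2
    tauto
  have step1 : CI p {T} (S1 \ S2)
      (((S1 ∩ S2) ∪ (S2 \ S1)) ∪ (Finset.univ.erase T \ (S1 ∪ S2))) :=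
    CI.weakUnion hpos dTY m2
  have step1' : CI p {T} (S1 \ S2)
      ((S1 ∩ S2) ∪ ((S2 \ S1) ∪ (Finset.univ.erase T \ (S1 ∪ S2)))) :=
    ci_congr step1 rfl (Finset.union_assoc _ _ _)
  have step2 : CI p {T} ((S1 \ S2) ∪ ((S2 \ S1) ∪ (Finset.univ.erase T \ (S1 ∪ S2))))
      (S1 ∩ S2) := CI.inter hpos dTWR dYWR step1' m1
  exact ci_congr step2 e3.symm rfl
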